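/- Let (w_k)_{k≥0} be a geodesic path in F starting at the identity: w₀ = e, |w_k| = k and w_k < w_{k+1} for all k ≥ 0. For x ∈ ℂ[F] set T x := Σ_k x̂(w_k) λ_{w_k} (a finite sum). Then for all x ∈ ℂ[F]: (T x)*·(T x) = (Σ_k |x̂(w_k)|²)·λ_e + x* † (T x) + (x* † (T x))*. -/

import Mathlib

open scoped Classical

noncomputable section

abbrev F := FreeGroup ℕ
abbrev A := MonoidAlgebra ℂ F

def lam (w : F) : A := MonoidAlgebra.single w 1

def tau (x : A) : ℂ := x.coeff 1

def len (w : F) : ℕ := w.toWord.length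

abbrev Letter := ℕ × Bool

def firstL (w : F) : Option Letter := w.toWord.head?
def lastL (w : F) : Option Letter := w.toWord.getLast?

def invLetter (s : Letter) : Letter := (s.1, !s.2)

/-- `g` is a prefix of `w` : `|g⁻¹w| = |w| - |g|`. -/
def isPrefix (g w : F) : Prop := len g + len (g⁻¹ * w) = len w

/-- the involution `x* (w) = conj (x (w⁻¹))`. -/
def starA (x : A) : A :=
  MonoidAlgebra.ofCoeff (Finsupp.mapDomain (fun w : F => w⁻¹)
    (Finsupp.mapRange (fun c => (starRingEnd ℂ) c) (by simp) x.coeff))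

def Ls (s : Letter) (x : A) : A := MonoidAlgebra.ofCoeff (Finsupp.filter (fun w => firstL w = some s) x.coeff)
def Rs (s : Letter) (x : A) : A := MonoidAlgebra.ofCoeff (Finsupp.filter (fun w => lastL w = some s) x.coeff)

def Lk (k : ℕ) (x : A) : A := Ls (k, true) x + Ls (k, false) x
def Rk (k : ℕ) (x : A) : A := Rs (k, true) x + Rs (k, false) x

def Lh (h : F) (x : A) : A := MonoidAlgebra.ofCoeff (Finsupp.filter (fun w => isPrefix h w) x.coeff)

def Heps (εe : ℂ) (ε : ℕ → ℂ) (x : A) : A :=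
  (εe * tau x) • lam 1 + ∑ᶠ k : ℕ, ε k • Lk k x

def HepsOp (εe : ℂ) (ε : ℕ → ℂ) (x : A) : A :=
  ((starRingEnd ℂ) εe * tau x) • lam 1 + ∑ᶠ k : ℕ, ((starRingEnd ℂ) (ε k)) • Rk k x

/-- noncommutative `L^{2^m}` norm. -/
def Lnorm (m : ℕ) (x : A) : ℝ :=
  (tau ((starA x * x) ^ (2 ^ (m - 1)))).re ^ ((1 : ℝ) / (2 ^ m : ℝ))

/-- `(τ(y^{2^{m-1}}))^{1/2^m}` for positive `y`. -/
def Qnorm (m : ℕ) (y : A) : ℝ :=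
  (tau (y ^ (2 ^ (m - 1)))).re ^ ((1 : ℝ) / (2 ^ m : ℝ))

def ddag (x y : A) : A :=
  Finsupp.sum x.coeff fun g cg => Finsupp.sum y.coeff fun h ch =>
    if ¬ isPrefix g⁻¹ h then (cg * ch) • lam (g * h) else 0

def dag (x y : A) : A :=
  Finsupp.sum x.coeff fun g cg => Finsupp.sum y.coeff fun h ch =>
    if isPrefix g⁻¹ h ∧ g⁻¹ ≠ h then (cg * ch) • lam (g * h) else 0

/-! Expanding `T x = ∑ₖ cₖ λ_{wₖ}`, `cₖ = x̂(wₖ)`, gives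
`(T x)* (T x) = ∑_{j,k} c̄ⱼ cₖ λ_{wⱼ⁻¹ wₖ}`, whose diagonal `j = k` is `(∑ₖ |cₖ|²) λₑ`.
The proper prefixes of `wₖ` are exactly the `wⱼ` with `j < k`, so `x* † λ_{wₖ}` only involves
the coefficients `x̂(wⱼ)`, `j < k`: hence `x* † (T x)` is the part `j < k` of the double sum,
and its adjoint is the part `j > k`. -/

open FreeGroup in
theorem isPrefix_iff_prefix_toWord {g h : F} : isPrefix g h ↔ g.toWord <+: h.toWord := by
  constructor
  · intro hp
    have hsub := toWord_mul_sublist g (g⁻¹ * h)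
    rw [mul_inv_cancel_left] at hsub
    exact ⟨_, (hsub.eq_of_length (by rw [List.length_append]; exact hp.symm)).symm⟩
  · rintro ⟨t, ht⟩
    have hred : IsReduced t := isReduced_toWord.infix ⟨g.toWord, [], by rw [List.append_nil, ht]⟩
    have hmk : g⁻¹ * h = mk t := by
      rw [inv_mul_eq_iff_eq_mul, ← mk_toWord (x := h), ← ht, ← mul_mk, mk_toWord]
    rw [isPrefix, len, len, hmk, toWord_mk, hred.reduce_eq, ← List.length_append, ht, len]

theorem isPrefix_refl (g : F) : isPrefix g g :=
  isPrefix_iff_prefix_toWord.2 (List.prefix_refl _)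

theorem isPrefix.trans {a b c : F} (hab : isPrefix a b) (hbc : isPrefix b c) : isPrefix a c :=
  isPrefix_iff_prefix_toWord.2
    ((isPrefix_iff_prefix_toWord.1 hab).trans (isPrefix_iff_prefix_toWord.1 hbc))

theorem isPrefix.len_le {g h : F} (hp : isPrefix g h) : len g ≤ len h :=
  Nat.le.intro hp

theorem isPrefix.eq_of_len_eq {g g' h : F} (hg : isPrefix g h) (hg' : isPrefix g' h)
    (hlen : len g = len g') : g = g' := by
  rw [isPrefix_iff_prefix_toWord, List.prefix_iff_eq_take] at hg hg'
  exact FreeGroup.toWord_injective (by rw [hg, hg']; exact congrArg (List.take · _) hlen)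

theorem Finsupp.sum_eq_finsum {α M N : Type*} [Zero M] [AddCommMonoid N] (f : α →₀ M)
    {g : α → M → N} (hg : ∀ a, g a 0 = 0) : f.sum g = ∑ᶠ a, g a (f a) := by
  refine (finsum_eq_sum_of_support_subset _ fun a ha => ?_).symm
  rw [Finset.mem_coe, Finsupp.mem_support_iff]
  intro hfa
  exact ha (show g a (f a) = 0 by rw [hfa, hg])

theorem lam_mul (g h : F) : lam g * lam h = lam (g * h) := by
  rw [lam, lam, lam, MonoidAlgebra.single_mul_single, one_mul]

theorem coeff_smul_lam (c : ℂ) (g : F) : (c • lam g).coeff = Finsupp.single g c := by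
  rw [lam, MonoidAlgebra.smul_single', mul_one, MonoidAlgebra.coeff_single]

theorem coeff_starA (x : A) (g : F) : (starA x).coeff g = starRingEnd ℂ (x.coeff g⁻¹) := by
  rw [starA, MonoidAlgebra.coeff_ofCoeff, ← inv_inv g,
    Finsupp.mapDomain_apply inv_injective, inv_inv, Finsupp.mapRange_apply]

theorem starA_smul_lam (c : ℂ) (g : F) : starA (c • lam g) = starRingEnd ℂ c • lam g⁻¹ := by
  rw [starA, coeff_smul_lam, Finsupp.mapRange_single, Finsupp.mapDomain_single,
    MonoidAlgebra.ofCoeff_single, lam, MonoidAlgebra.smul_single', mul_one]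

theorem starA_add (x y : A) : starA (x + y) = starA x + starA y := by
  rw [starA, starA, starA, MonoidAlgebra.coeff_add, Finsupp.mapRange_add (map_add _),
    Finsupp.mapDomain_add, MonoidAlgebra.ofCoeff_add]

theorem starA_sum {ι : Type*} (s : Finset ι) (f : ι → A) :
    starA (∑ i ∈ s, f i) = ∑ i ∈ s, starA (f i) :=
  map_sum (AddMonoidHom.mk' starA starA_add) f s

theorem starA_sum_smul_lam_mul_sum {ι : Type*} (s : Finset ι) (c : ι → ℂ) (g : ι → F) :
    starA (∑ i ∈ s, c i • lam (g i)) * ∑ i ∈ s, c i • lam (g i)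
      = ∑ i ∈ s, ∑ j ∈ s, (starRingEnd ℂ (c i) * c j) • lam ((g i)⁻¹ * g j) := by
  simp only [starA_sum, starA_smul_lam, Finset.sum_mul_sum, smul_mul_smul_comm, lam_mul]

theorem dag_sum_right {ι : Type*} (x : A) (s : Finset ι) (y : ι → A) :
    dag x (∑ i ∈ s, y i) = ∑ i ∈ s, dag x (y i) := by
  simp only [dag, MonoidAlgebra.coeff_sum]
  rw [← Finsupp.sum_finsetSum_comm]
  refine Finsupp.sum_congr fun g _ => (Finsupp.sum_finsetSum_index ?_ ?_).symm
  · intro h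
    simp
  · intro h a b
    split_ifs <;> simp [add_smul, mul_add]

theorem dag_starA_smul_lam (x : A) (c : ℂ) (h : F) :
    dag (starA x) (c • lam h)
      = ∑ᶠ g ∈ {g | isPrefix g h ∧ g ≠ h}, (starRingEnd ℂ (x.coeff g) * c) • lam (g⁻¹ * h) := by
  rw [dag, coeff_smul_lam]
  simp only [mul_zero, zero_smul, ite_self, Finsupp.sum_single_index]
  rw [Finsupp.sum_eq_finsum _ (fun g => by simp), ← finsum_comp_equiv (Equiv.inv F)]
  simp only [Equiv.inv_apply, inv_inv, coeff_starA, finsum_eq_if, Set.mem_ofPred_eq]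

theorem starA_conj_mul_smul_lam_inv_mul (a b : ℂ) (g h : F) :
    starA ((starRingEnd ℂ a * b) • lam (g⁻¹ * h)) = (starRingEnd ℂ b * a) • lam (h⁻¹ * g) := by
  rw [starA_smul_lam, map_mul, Complex.conj_conj, mul_comm, mul_inv_rev, inv_inv]

section Geodesic

variable {w : ℕ → F}

theorem isPrefix_of_le (hchain : ∀ k, isPrefix (w k) (w (k + 1))) {j k : ℕ} (hjk : j ≤ k) :
    isPrefix (w j) (w k) := by
  induction k, hjk using Nat.le_induction with
  | base => exact isPrefix_refl _
  | succ k _ ih => exact ih.trans (hchain k)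

theorem injective_of_len_eq (hlen : ∀ k, len (w k) = k) : Function.Injective w :=
  fun j k hjk => by rw [← hlen j, ← hlen k, hjk]

theorem eq_apply_len_of_isPrefix (hlen : ∀ k, len (w k) = k)
    (hchain : ∀ k, isPrefix (w k) (w (k + 1))) {g : F} {k : ℕ} (hg : isPrefix g (w k)) :
    g = w (len g) := by
  have hle : len g ≤ k := hlen k ▸ hg.len_le
  exact hg.eq_of_len_eq (isPrefix_of_le hchain hle) (hlen _).symm

theorem setOf_isPrefix_ne_eq_image (hlen : ∀ k, len (w k) = k)
    (hchain : ∀ k, isPrefix (w k) (w (k + 1))) (k : ℕ) :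
    {g | isPrefix g (w k) ∧ g ≠ w k} = w '' Set.Iio k := by
  ext g
  constructor
  · rintro ⟨hg, hne⟩
    have hgw := eq_apply_len_of_isPrefix hlen hchain hg
    refine ⟨len g, lt_of_le_of_ne (hlen k ▸ hg.len_le) fun h => hne ?_, hgw.symm⟩
    rw [hgw, h]
  · rintro ⟨j, hj, rfl⟩
    exact ⟨isPrefix_of_le hchain (le_of_lt hj),
      fun h => (ne_of_lt hj) (injective_of_len_eq hlen h)⟩

theorem dag_starA_smul_lam_of_geodesic (hlen : ∀ k, len (w k) = k)
    (hchain : ∀ k, isPrefix (w k) (w (k + 1))) (x : A) (c : ℂ) (k : ℕ) :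
    dag (starA x) (c • lam (w k))
      = ∑ j ∈ Finset.range k, (starRingEnd ℂ (x.coeff (w j)) * c) • lam ((w j)⁻¹ * w k) := by
  rw [dag_starA_smul_lam, setOf_isPrefix_ne_eq_image hlen hchain,
    finsum_mem_image (injective_of_len_eq hlen).injOn, ← Finset.coe_range, finsum_mem_coe_finset]

end Geodesic

theorem sum_range_sum_range_eq_diag_add_lt_add_gt {M : Type*} [AddCommMonoid M] (n : ℕ)
    (t : ℕ → ℕ → M) :
    ∑ j ∈ Finset.range n, ∑ k ∈ Finset.range n, t j k
      = ∑ k ∈ Finset.range n, t k k + ∑ k ∈ Finset.range n, ∑ j ∈ Finset.range k, t j k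
        + ∑ k ∈ Finset.range n, ∑ j ∈ Finset.range k, t k j := by
  induction n with
  | zero => simp
  | succ n ih =>
    simp only [Finset.sum_range_succ, Finset.sum_add_distrib, ih]
    abel

theorem geodesic_projection_square_general (w : ℕ → F)
    (hwlen : ∀ k : ℕ, len (w k) = k)
    (hwchain : ∀ k : ℕ, isPrefix (w k) (w (k + 1)) ∧ w k ≠ w (k + 1)) (x : A) :
    starA (∑ᶠ k : ℕ, x.coeff (w k) • lam (w k)) * (∑ᶠ k : ℕ, x.coeff (w k) • lam (w k))
      = (∑ᶠ k : ℕ, (Complex.normSq (x.coeff (w k)) : ℂ)) • lam 1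
        + dag (starA x) (∑ᶠ k : ℕ, x.coeff (w k) • lam (w k))
        + starA (dag (starA x) (∑ᶠ k : ℕ, x.coeff (w k) • lam (w k))) := by
  have hchain k := (hwchain k).1
  set c : ℕ → ℂ := fun k => x.coeff (w k)
  obtain ⟨N, hN⟩ := Set.Finite.bddAbove
    (x.coeff.hasFiniteSupport.fun_comp_of_injective (injective_of_len_eq hwlen))
  have hc : Function.support c ⊆ Finset.range (N + 1) :=
    fun k hk => Finset.mem_range_succ_iff.2 (hN hk)
  rw [finsum_eq_sum_of_support_subset (fun k => c k • lam (w k))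
      ((Function.support_smul_subset_left c _).trans hc),
    finsum_eq_sum_of_support_subset (fun k => (Complex.normSq (c k) : ℂ))
      ((Function.support_comp_subset (g := fun z : ℂ => (Complex.normSq z : ℂ)) (by simp) c).trans
        hc),
    starA_sum_smul_lam_mul_sum, dag_sum_right, sum_range_sum_range_eq_diag_add_lt_add_gt]
  simp only [dag_starA_smul_lam_of_geodesic hwlen hchain, starA_sum,
    starA_conj_mul_smul_lam_inv_mul, Finset.sum_smul, inv_mul_cancel,
    Complex.normSq_eq_conj_mul_self, c]

/-- for a geodesic path `(w_k)` starting at the identity and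
`T x = Σ_k x̂(w_k) λ_{w_k}`, one has
`(Tx)*(Tx) = (Σ_k |x̂(w_k)|²) λ_e + x* † (Tx) + (x* † (Tx))*`. -/
theorem geodesic_projection_square (w : ℕ → F)
    (hw0 : w 0 = 1) (hwlen : ∀ k : ℕ, len (w k) = k)
    (hwchain : ∀ k : ℕ, isPrefix (w k) (w (k + 1)) ∧ w k ≠ w (k + 1)) (x : A) :
    starA (∑ᶠ k : ℕ, x.coeff (w k) • lam (w k)) * (∑ᶠ k : ℕ, x.coeff (w k) • lam (w k))
      = (∑ᶠ k : ℕ, (Complex.normSq (x.coeff (w k)) : ℂ)) • lam 1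
        + dag (starA x) (∑ᶠ k : ℕ, x.coeff (w k) • lam (w k))
        + starA (dag (starA x) (∑ᶠ k : ℕ, x.coeff (w k) • lam (w k))) :=
  geodesic_projection_square_general w hwlen hwchain x
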